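/- arXiv:2605.22299 — 4 statements merged into one kernel-verified Lean document; each statement's English description precedes it below -/
import Mathlib

section
/- Let X be a real normed vector space, p > 0, and let S be a p-periodic time-dependent semiflow on X such that for every pair t ≥ s the map S(t,s) : X → X is Lipschitz continuous. Then for every γ > 0, all real numbers t ≥ s, and every u ∈ X, the image of the fiber M_{s,u}(γ) under S(t,s) is contained in the fiber through the image point: S(t,s)(M_{s,u}(γ)) ⊆ M_{t, S(t,s;u)}(γ). -/
open Filter

/-- The fiber `M_{t,u}(γ)`: points whose forward orbit under the period map
`Φ_t = S(t+p, t)` synchronizes with that of `u` at exponential rate `γ`. -/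
noncomputable def Mset {X : Type*} [NormedAddCommGroup X]
    (S : ℝ → ℝ → X → X) (p γ t : ℝ) (u : X) : Set X :=
  {v : X | Filter.limsup
      (fun n : ℕ => (((1 : ℝ) / (n : ℝ)) *
        Real.log ‖(S (t + p) t)^[n] u - (S (t + p) t)^[n] v‖ : EReal))
      Filter.atTop ≤ ((Real.log γ : ℝ) : EReal)}

/-- If `S` is a `p`-periodic time-dependent semiflow on `X` whose time-`(t,s)` maps are
Lipschitz, then `S(t,s)` maps the fiber `M_{s,u}(γ)` into the fiber through the image
point: `S(t,s)(M_{s,u}(γ)) ⊆ M_{t,S(t,s;u)}(γ)`. -/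
theorem image_Mset_subset {X : Type*} [NormedAddCommGroup X] [NormedSpace ℝ X]
    (S : ℝ → ℝ → X → X) (p : ℝ) (hp : 0 < p)
    (hid : ∀ s : ℝ, S s s = id)
    (hcomp : ∀ t s r : ℝ, r ≤ s → s ≤ t → S t s ∘ S s r = S t r)
    (hper : ∀ t s : ℝ, s ≤ t → S (t + p) (s + p) = S t s)
    (hLip : ∀ t s : ℝ, s ≤ t → ∃ K : NNReal, LipschitzWith K (S t s))
    (γ : ℝ) (hγ : 0 < γ) (t s : ℝ) (hts : s ≤ t) (u : X) :
    S t s '' Mset S p γ s u ⊆ Mset S p γ t (S t s u) := by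
  rintro _ ⟨v, hv, rfl⟩
  -- iterated periodicity
  have hshift : ∀ (n : ℕ) (a b : ℝ), b ≤ a → S (a + n * p) (b + n * p) = S a b := by
    intro n
    induction n with
    | zero => intro a b h; simp
    | succ n ih =>
      intro a b h
      have hnp : (0:ℝ) ≤ (n:ℝ) * p := mul_nonneg (Nat.cast_nonneg n) hp.le
      have h1 := hper (a + n * p) (b + n * p) (by linarith)
      push_cast
      rw [show a + ((n:ℝ) + 1) * p = (a + n * p) + p by ring,
        show b + ((n:ℝ) + 1) * p = (b + n * p) + p by ring, h1, ih a b h]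
  -- iterates of the period map
  have hiter : ∀ (r : ℝ) (n : ℕ) (x : X), (S (r + p) r)^[n] x = S (r + n * p) r x := by
    intro r n
    induction n with
    | zero => intro x; simp [hid]
    | succ n ih =>
      intro x
      have hnp : (0:ℝ) ≤ (n:ℝ) * p := mul_nonneg (Nat.cast_nonneg n) hp.le
      rw [Function.iterate_succ_apply', ih]
      push_cast
      have h1 : S (r + ((n:ℝ) + 1) * p) (r + n * p) = S (r + p) r := by
        have h2 := hshift n (r + p) r (by linarith)
        rw [show r + ((n:ℝ)+1)*p = (r + p) + n*p by ring]
        exact h2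
      rw [← h1]
      exact congrFun (hcomp (r + ((n:ℝ)+1)*p) (r + n*p) r (by linarith) (by linarith)) x
  -- commutation : Φ_t^n ∘ S t s = S t s ∘ Φ_s^n
  have hcomm : ∀ (n : ℕ) (x : X),
      (S (t + p) t)^[n] (S t s x) = S t s ((S (s + p) s)^[n] x) := by
    intro n x
    have hnp : (0:ℝ) ≤ (n:ℝ) * p := mul_nonneg (Nat.cast_nonneg n) hp.le
    rw [hiter, hiter]
    have h1 : S (t + n * p) t (S t s x) = S (t + n * p) s x :=
      congrFun (hcomp (t + n * p) t s hts (by linarith)) x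
    have h2 : S t s ((S (s + n * p) s) x) = S (t + n * p) s x := by
      have h3 : S t s = S (t + n * p) (s + n * p) := (hshift n t s hts).symm
      rw [h3]
      exact congrFun (hcomp (t + n * p) (s + n * p) s (by linarith) (by linarith)) x
    rw [h1, h2]
  -- propagation of orbit merging
  have hprop : ∀ (f : X → X) (a b : X) (n0 : ℕ), f^[n0] a = f^[n0] b →
      ∀ n ≥ n0, f^[n] a = f^[n] b := by
    intro f a b n0 h0 n hn
    have : n = (n - n0) + n0 := (Nat.sub_add_cancel hn).symm
    rw [this, Function.iterate_add_apply, Function.iterate_add_apply, h0]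
  simp only [Mset, Set.mem_setOf_eq] at hv ⊢
  by_cases hmerge : ∃ n : ℕ,
      (S (t + p) t)^[n] (S t s u) = (S (t + p) t)^[n] (S t s v)
  · -- orbits merge: all terms are eventually `log 0 = 0`, and `0 ≤ log γ`.
    obtain ⟨n0, h0⟩ := hmerge
    -- find m with s + m p ≥ t + n0 p
    obtain ⟨m, hm⟩ := exists_nat_ge ((t + n0 * p - s) / p)
    have hmp : t + n0 * p ≤ s + m * p := by
      rw [div_le_iff₀ hp] at hm; linarith
    have hn0p : (0:ℝ) ≤ (n0:ℝ) * p := mul_nonneg (Nat.cast_nonneg n0) hp.le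
    -- the s-orbits merge at time m
    have hmerge_s : (S (s + p) s)^[m] u = (S (s + p) s)^[m] v := by
      have key : ∀ x : X, (S (s + p) s)^[m] x =
          S (s + m * p) (t + n0 * p) ((S (t + p) t)^[n0] (S t s x)) := by
        intro x
        rw [hiter, hiter]
        have h1 : S (t + n0 * p) t (S t s x) = S (t + n0 * p) s x :=
          congrFun (hcomp (t + n0 * p) t s hts (by linarith)) x
        rw [h1]
        exact (congrFun (hcomp (s + m * p) (t + n0 * p) s (by linarith) hmp) x).symm
      rw [key u, key v, h0]
    -- hence 0 ≤ log γ
    have hb0 : ∀ n ≥ m, (((1 : ℝ) / (n : ℝ)) *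
        Real.log ‖(S (s + p) s)^[n] u - (S (s + p) s)^[n] v‖ : EReal) = (0 : EReal) := by
      intro n hn
      rw [hprop _ _ _ _ hmerge_s n hn]
      simp
    have hlim_b : Filter.limsup
        (fun n : ℕ => (((1 : ℝ) / (n : ℝ)) *
          Real.log ‖(S (s + p) s)^[n] u - (S (s + p) s)^[n] v‖ : EReal))
        Filter.atTop = (0 : EReal) := by
      rw [Filter.limsup_congr (Filter.eventually_atTop.mpr ⟨m, hb0⟩)]
      exact Filter.limsup_const _
    have hγ0 : (0 : EReal) ≤ ((Real.log γ : ℝ) : EReal) := hlim_b ▸ hv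
    -- all t-terms are eventually 0
    have ha0 : ∀ n ≥ n0, (((1 : ℝ) / (n : ℝ)) *
        Real.log ‖(S (t + p) t)^[n] (S t s u) - (S (t + p) t)^[n] (S t s v)‖ : EReal)
        = (0 : EReal) := by
      intro n hn
      rw [hprop _ _ _ _ h0 n hn]
      simp
    rw [Filter.limsup_congr (Filter.eventually_atTop.mpr ⟨n0, ha0⟩), Filter.limsup_const]
    exact hγ0
  · push_neg at hmerge
    obtain ⟨K, hK⟩ := hLip t s hts
    set K' : ℝ := max (K : ℝ) 1 with hK'def
    have hK'1 : (1:ℝ) ≤ K' := le_max_right _ _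
    have hK'0 : (0:ℝ) < K' := lt_of_lt_of_le one_pos hK'1
    -- pointwise estimates
    have hA : ∀ n : ℕ,
        ‖(S (t + p) t)^[n] (S t s u) - (S (t + p) t)^[n] (S t s v)‖ ≤
          K' * ‖(S (s + p) s)^[n] u - (S (s + p) s)^[n] v‖ := by
      intro n
      rw [hcomm n u, hcomm n v]
      calc ‖S t s ((S (s + p) s)^[n] u) - S t s ((S (s + p) s)^[n] v)‖
          ≤ (K : ℝ) * ‖(S (s + p) s)^[n] u - (S (s + p) s)^[n] v‖ := by
            have := hK.dist_le_mul ((S (s + p) s)^[n] u) ((S (s + p) s)^[n] v)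
            rwa [dist_eq_norm, dist_eq_norm] at this
        _ ≤ K' * ‖(S (s + p) s)^[n] u - (S (s + p) s)^[n] v‖ :=
            mul_le_mul_of_nonneg_right (le_max_left _ _) (norm_nonneg _)
    have hApos : ∀ n : ℕ,
        0 < ‖(S (t + p) t)^[n] (S t s u) - (S (t + p) t)^[n] (S t s v)‖ := by
      intro n
      rw [norm_pos_iff, sub_ne_zero]
      exact hmerge n
    have hBpos : ∀ n : ℕ,
        0 < ‖(S (s + p) s)^[n] u - (S (s + p) s)^[n] v‖ := by
      intro n
      by_contra h
      push_neg at h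
      have hB0 : ‖(S (s + p) s)^[n] u - (S (s + p) s)^[n] v‖ = 0 :=
        le_antisymm h (norm_nonneg _)
      have := hA n
      rw [hB0, mul_zero] at this
      exact absurd (le_antisymm this (norm_nonneg _)) (hApos n).ne'
    -- log estimate
    have hlog : ∀ n : ℕ, 1 ≤ n →
        ((1:ℝ)/(n:ℝ)) * Real.log ‖(S (t + p) t)^[n] (S t s u) - (S (t + p) t)^[n] (S t s v)‖
          ≤ ((1:ℝ)/(n:ℝ)) * Real.log K' +
            ((1:ℝ)/(n:ℝ)) * Real.log ‖(S (s + p) s)^[n] u - (S (s + p) s)^[n] v‖ := by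
      intro n hn
      have hlog1 : Real.log ‖(S (t + p) t)^[n] (S t s u) - (S (t + p) t)^[n] (S t s v)‖
          ≤ Real.log K' + Real.log ‖(S (s + p) s)^[n] u - (S (s + p) s)^[n] v‖ := by
        rw [← Real.log_mul hK'0.ne' (hBpos n).ne']
        exact Real.log_le_log (hApos n) (hA n)
      have hn0 : (0:ℝ) ≤ 1/(n:ℝ) := by positivity
      calc ((1:ℝ)/(n:ℝ)) * Real.log ‖(S (t + p) t)^[n] (S t s u) - (S (t + p) t)^[n] (S t s v)‖
          ≤ ((1:ℝ)/(n:ℝ)) * (Real.log K' +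
              Real.log ‖(S (s + p) s)^[n] u - (S (s + p) s)^[n] v‖) :=
            mul_le_mul_of_nonneg_left hlog1 hn0
        _ = _ := by ring
    -- final ε-argument
    suffices hsuff : ∀ ε : ℝ, 0 < ε → Filter.limsup
        (fun n : ℕ => (((1 : ℝ) / (n : ℝ)) *
          Real.log ‖(S (t + p) t)^[n] (S t s u) - (S (t + p) t)^[n] (S t s v)‖ : EReal))
        Filter.atTop ≤ ((Real.log γ + ε : ℝ) : EReal) by
      by_contra h
      push_neg at h
      obtain ⟨z, hz1, hz2⟩ := EReal.exists_between_coe_real h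
      have hε : (0:ℝ) < z - Real.log γ := by
        have := EReal.coe_lt_coe_iff.mp hz1
        linarith
      have := hsuff (z - Real.log γ) hε
      rw [show Real.log γ + (z - Real.log γ) = z by ring] at this
      exact absurd (lt_of_le_of_lt this hz2) (lt_irrefl _)
    intro ε hε
    -- (1/n) log K' is eventually < ε/2
    have htend : Filter.Tendsto (fun n : ℕ => ((1:ℝ)/(n:ℝ)) * Real.log K') atTop (nhds 0) := by
      have := tendsto_one_div_atTop_nhds_zero_nat.mul_const (Real.log K')
      simpa using this
    have hev1 : ∀ᶠ n : ℕ in atTop, ((1:ℝ)/(n:ℝ)) * Real.log K' < ε/2 :=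
      htend.eventually_lt_const (by linarith)
    -- (1/n) log B n is eventually < log γ + ε/2
    have hev2 : ∀ᶠ n : ℕ in atTop,
        (((1 : ℝ) / (n : ℝ)) *
          Real.log ‖(S (s + p) s)^[n] u - (S (s + p) s)^[n] v‖ : EReal)
          < ((Real.log γ + ε/2 : ℝ) : EReal) := by
      apply eventually_lt_of_limsup_lt (lt_of_le_of_lt hv _)
      exact_mod_cast (by linarith : Real.log γ < Real.log γ + ε/2)
    have hev3 : ∀ᶠ n : ℕ in atTop, 1 ≤ n := Filter.eventually_atTop.mpr ⟨1, fun n h => h⟩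
    apply Filter.limsup_le_of_le (by isBoundedDefault)
    filter_upwards [hev1, hev2, hev3] with n h1 h2 h3
    have h2' : ((1:ℝ)/(n:ℝ)) * Real.log ‖(S (s + p) s)^[n] u - (S (s + p) s)^[n] v‖
        < Real.log γ + ε/2 := EReal.coe_lt_coe_iff.mp h2
    have := hlog n h3
    have hfin : ((1:ℝ)/(n:ℝ)) *
        Real.log ‖(S (t + p) t)^[n] (S t s u) - (S (t + p) t)^[n] (S t s v)‖
        ≤ Real.log γ + ε := by linarith
    exact EReal.coe_le_coe_iff.mpr hfin
end

section
/- Let X be a real normed vector space, p > 0, and let S be a p-periodic time-dependent semiflow on X. Fix s ∈ ℝ and suppose there exists a constant C̃ > 0 such that for every t with s ≤ t ≤ s + p the map S(t,s) is Lipschitz with Lipschitz constant at most C̃. Let γ > 0, C > 0, and let u, v ∈ X satisfy ‖Φ_s^n(u) − Φ_s^n(v)‖ < C·γ^n for every natural number n. Then there exists a constant Ĉ > 0 such that for all t ≥ s, ‖S(t,s;u) − S(t,s;v)‖ ≤ Ĉ · e^{(t−s)·log(γ)/p}. -/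
open Filter

/-- If `S` is a `p`-periodic time-dependent semiflow, the maps `S(t,s)` for
`s ≤ t ≤ s + p` are Lipschitz with uniform constant `C̃`, and the orbits of `u` and `v`
under the period map `Φ_s = S(s+p, s)` satisfy `‖Φ_s^n u − Φ_s^n v‖ < C γ^n`, then there
is `Ĉ > 0` with `‖S(t,s;u) − S(t,s;v)‖ ≤ Ĉ e^{(t−s) log(γ)/p}` for all `t ≥ s`. -/
theorem semiflow_exponential_decay {X : Type*} [NormedAddCommGroup X] [NormedSpace ℝ X]
    (S : ℝ → ℝ → X → X) (p : ℝ) (hp : 0 < p)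
    (hid : ∀ s : ℝ, S s s = id)
    (hcomp : ∀ t s r : ℝ, r ≤ s → s ≤ t → S t s ∘ S s r = S t r)
    (hper : ∀ t s : ℝ, s ≤ t → S (t + p) (s + p) = S t s)
    (s : ℝ) (Ctil : NNReal) (hCtil : 0 < (Ctil : ℝ))
    (hLip : ∀ t : ℝ, s ≤ t → t ≤ s + p → LipschitzWith Ctil (S t s))
    (γ C : ℝ) (hγ : 0 < γ) (hC : 0 < C) (u v : X)
    (hsep : ∀ n : ℕ, ‖(S (s + p) s)^[n] u - (S (s + p) s)^[n] v‖ < C * γ ^ n) :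
    ∃ Chat : ℝ, 0 < Chat ∧ ∀ t : ℝ, s ≤ t →
      ‖S t s u - S t s v‖ ≤ Chat * Real.exp ((t - s) * Real.log γ / p) := by
  -- periodicity iterated k times
  have per_n : ∀ (k : ℕ) (t r : ℝ), r ≤ t → S (t + k * p) (r + k * p) = S t r := by
    intro k
    induction k with
    | zero => simp
    | succ k ih =>
      intro t r htr
      have e1 : t + ((k : ℕ) + 1 : ℕ) * p = (t + k * p) + p := by push_cast; ring
      have e2 : r + ((k : ℕ) + 1 : ℕ) * p = (r + k * p) + p := by push_cast; ring
      rw [e1, e2, hper _ _ (by linarith), ih t r htr]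
  -- S (s + n p) s is the n-th iterate of the period map
  have hΦ : ∀ n : ℕ, S (s + n * p) s = (S (s + p) s)^[n] := by
    intro n
    induction n with
    | zero => simp [hid]
    | succ n ih =>
      have hnp : s ≤ s + n * p := by
        have : (0:ℝ) ≤ n * p := by positivity
        linarith
      have e1 : s + ((n : ℕ) + 1 : ℕ) * p = (s + p) + n * p := by push_cast; ring
      have hc := hcomp (s + ((n : ℕ) + 1 : ℕ) * p) (s + n * p) s hnp
        (by rw [e1]; linarith)
      rw [← hc, ih]
      have := per_n n (s + p) s (by linarith)
      rw [e1, this, Function.iterate_succ']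
  refine ⟨(Ctil : ℝ) * C * max 1 γ⁻¹, by positivity, ?_⟩
  intro t ht
  set n : ℕ := ⌊(t - s) / p⌋₊ with hn
  have ha0 : 0 ≤ (t - s) / p := div_nonneg (by linarith) hp.le
  have hn1 : (n : ℝ) ≤ (t - s) / p := Nat.floor_le ha0
  have hn2 : (t - s) / p < n + 1 := Nat.lt_floor_add_one _
  have hnp_le : (n : ℝ) * p ≤ t - s := by
    rw [← le_div_iff₀ hp]; exact hn1
  have hts_lt : t - s < ((n : ℝ) + 1) * p := by
    rw [← div_lt_iff₀ hp]; exact hn2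
  set r : ℝ := t - s - n * p with hr
  have hr0 : 0 ≤ r := by simp [hr]; linarith
  have hrp : r < p := by simp [hr]; nlinarith
  -- decompose S t s
  have hdec : S t s = (S (s + r) s) ∘ (S (s + p) s)^[n] := by
    have h1 : S t s = S t (s + n * p) ∘ S (s + n * p) s := by
      rw [hcomp t (s + n * p) s (by nlinarith) (by simp [hr] at hr0 ⊢; linarith)]
    have h2 : S t (s + n * p) = S (s + r) s := by
      have := per_n n (s + r) s (by linarith)
      rw [← this]
      congr 1
      simp [hr]; ring
    rw [h1, h2, hΦ]
  have hLr := hLip (s + r) (by linarith) (by linarith)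
  have key : ‖S t s u - S t s v‖ ≤ (Ctil : ℝ) * (C * γ ^ n) := by
    rw [hdec]
    simp only [Function.comp_apply]
    calc ‖S (s + r) s ((S (s + p) s)^[n] u) - S (s + r) s ((S (s + p) s)^[n] v)‖
        ≤ (Ctil : ℝ) * ‖(S (s + p) s)^[n] u - (S (s + p) s)^[n] v‖ := by
          have := hLr.dist_le_mul ((S (s + p) s)^[n] u) ((S (s + p) s)^[n] v)
          simpa [dist_eq_norm] using this
      _ ≤ (Ctil : ℝ) * (C * γ ^ n) :=
          mul_le_mul_of_nonneg_left (le_of_lt (hsep n)) (by positivity)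
  -- compare γ^n with the exponential
  have hexp : Real.exp ((t - s) * Real.log γ / p) = γ ^ ((t - s) / p) := by
    rw [Real.rpow_def_of_pos hγ]
    ring_nf
  have hγn : γ ^ n ≤ max 1 γ⁻¹ * γ ^ ((t - s) / p) := by
    rw [← Real.rpow_natCast γ n]
    rcases le_or_gt 1 γ with h1 | h1
    · have h2 : γ ^ ((n : ℝ)) ≤ γ ^ ((t - s) / p) :=
        Real.rpow_le_rpow_of_exponent_le h1 hn1
      calc γ ^ ((n : ℝ)) ≤ γ ^ ((t - s) / p) := h2
        _ ≤ max 1 γ⁻¹ * γ ^ ((t - s) / p) := by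
            have : (0:ℝ) ≤ γ ^ ((t - s) / p) := (Real.rpow_pos_of_pos hγ _).le
            nlinarith [le_max_left (1:ℝ) γ⁻¹]
    · have hsplit : γ ^ ((n : ℝ)) = γ ^ ((n : ℝ) - (t - s) / p) * γ ^ ((t - s) / p) := by
        rw [← Real.rpow_add hγ]; ring_nf
      rw [hsplit]
      have h3 : γ ^ ((n : ℝ) - (t - s) / p) ≤ γ ^ (-1 : ℝ) :=
        Real.rpow_le_rpow_of_exponent_ge hγ h1.le (by linarith)
      have h4 : γ ^ (-1 : ℝ) = γ⁻¹ := Real.rpow_neg_one γ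
      have h5 : γ ^ ((n : ℝ) - (t - s) / p) ≤ max 1 γ⁻¹ := by
        rw [h4] at h3; exact h3.trans (le_max_right _ _)
      have : (0:ℝ) ≤ γ ^ ((t - s) / p) := (Real.rpow_pos_of_pos hγ _).le
      nlinarith
  calc ‖S t s u - S t s v‖ ≤ (Ctil : ℝ) * (C * γ ^ n) := key
    _ ≤ (Ctil : ℝ) * (C * (max 1 γ⁻¹ * γ ^ ((t - s) / p))) := by
        have := mul_le_mul_of_nonneg_left hγn hC.le
        exact mul_le_mul_of_nonneg_left this (by positivity)
    _ = (Ctil : ℝ) * C * max 1 γ⁻¹ * Real.exp ((t - s) * Real.log γ / p) := by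
        rw [hexp]; ring
end

section
/- Let X, Y be real Banach spaces, P : X → X a continuous linear projection (P ∘ P = P), and p > 0. Let R : ℝ × X → Y be continuous, p-periodic in its first argument, continuously Fréchet differentiable in its second argument with (t,u) ↦ D₂R(t,u) jointly continuous, and satisfying R(t,0) = 0 and D₂R(t,0) = 0 for all t ∈ ℝ. Let χ : [0,∞) → [0,1] be a C^∞ function with χ(y) = 1 for y ∈ [0,1], χ(y) = 0 for y ≥ 2, and |χ'(y)| ≤ 2 for all y ≥ 0. For ρ > 0 define R_ρ(t,u) := χ(‖P u‖/ρ) · χ(‖u − P u‖/ρ) · R(t,u). Then for every ε > 0 there exists ρ₀ > 0 such that for every ρ ∈ (0, ρ₀] and every t ∈ ℝ, the map u ↦ R_ρ(t,u) is globally Lipschitz on X with Lipschitz constant at most ε. -/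
/-!
On the support of the cut-off coefficient `c(u) = χ(‖Pu‖/ρ) χ(‖u - Pu‖/ρ)` one has `‖u‖ ≤ 4ρ`,
and `c` is `O(1/ρ)`-Lipschitz with `|c| ≤ 1`. Since `D₂R` is jointly continuous, periodic in `t`
and vanishes on `u = 0`, it is uniformly `δ`-small on a ball `‖u‖ ≤ r`, so there `R(t,·)` is
`δ`-Lipschitz and `‖R(t,u)‖ ≤ δ ‖u‖`. In
`c(u) R(t,u) - c(v) R(t,v) = c(u) (R(t,u) - R(t,v)) + (c(u) - c(v)) R(t,v)` the second term is
`O(1/ρ) ‖u - v‖ · δ ρ`: the factor `1/ρ` is cancelled by the size of the support, so the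
Lipschitz constant is `O(δ)` for every `ρ ≤ r/4`.
-/

open Metric

theorem abs_mul_sub_mul_le {a b c d : ℝ} (hb : |b| ≤ 1) (hc : |c| ≤ 1) :
    |a * b - c * d| ≤ |a - c| + |b - d| := by
  calc |a * b - c * d| = |(a - c) * b + c * (b - d)| := by ring_nf
    _ ≤ |a - c| * |b| + |c| * |b - d| := by
        rw [← abs_mul, ← abs_mul]; exact abs_add_le _ _
    _ ≤ |a - c| * 1 + 1 * |b - d| := by gcongr
    _ = |a - c| + |b - d| := by ring

theorem abs_sub_le_of_abs_deriv_le {f : ℝ → ℝ} (hf : Differentiable ℝ f) {C : ℝ}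
    (hC : ∀ y, 0 ≤ y → |deriv f y| ≤ C) {a b : ℝ} (ha : 0 ≤ a) (hb : 0 ≤ b) :
    |f a - f b| ≤ C * |a - b| := by
  simpa only [Real.norm_eq_abs] using
    (convex_Ici (0 : ℝ)).norm_image_sub_le_of_norm_hasDerivWithin_le
      (fun x _ => (hf x).hasDerivAt.hasDerivWithinAt) hC hb ha

section Periodic

variable {X : Type*} [NormedAddCommGroup X]

theorem periodic_of_hasFDerivAt [NormedSpace ℝ X] {Y : Type*} [NormedAddCommGroup Y]
    [NormedSpace ℝ Y] {R : ℝ → X → Y} {D : ℝ → X → X →L[ℝ] Y} {p : ℝ}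
    (hR : Function.Periodic R p) (hD : ∀ t u, HasFDerivAt (R t) (D t u) u) :
    Function.Periodic D p := fun t => funext fun u =>
  (show HasFDerivAt (R t) (D (t + p) u) u from hR t ▸ hD (t + p) u).unique (hD t u)

theorem exists_pos_forall_norm_le_of_periodic {E : Type*} [NormedAddCommGroup E]
    {F : ℝ → X → E} {p : ℝ} (hp : 0 < p) (hF : Continuous fun q : ℝ × X => F q.1 q.2)
    (hper : Function.Periodic F p) (h0 : ∀ t, F t 0 = 0) {δ : ℝ} (hδ : 0 < δ) :
    ∃ r > 0, ∀ t u, ‖u‖ ≤ r → ‖F t u‖ ≤ δ := by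
  set K : Set (ℝ × X) := Set.Icc 0 p ×ˢ {0}
  set U : Set (ℝ × X) := {q | ‖F q.1 q.2‖ < δ}
  have hKU : K ⊆ U := by
    rintro ⟨t, u⟩ ⟨-, rfl : u = 0⟩
    simpa [U, h0] using hδ
  obtain ⟨r, hr, hrU⟩ := (isCompact_Icc.prod isCompact_singleton).exists_thickening_subset_open
    (isOpen_lt (continuous_norm.comp hF) continuous_const) hKU
  refine ⟨r / 2, half_pos hr, fun t u hu => ?_⟩
  obtain ⟨s, hs, hts⟩ := hper.exists_mem_Ico₀ hp t
  have hsu : (s, u) ∈ thickening r K := by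
    refine mem_thickening_iff.2 ⟨(s, 0), ⟨Set.Ico_subset_Icc_self hs, rfl⟩, ?_⟩
    rw [Prod.dist_eq, dist_self, dist_zero_right]
    exact max_lt hr (by linarith)
  rw [hts]
  exact (hrU hsu).le

end Periodic

section Cutoff

variable {X : Type*} [NormedAddCommGroup X] {χ : ℝ → ℝ} {ρ : ℝ}

theorem abs_sub_comp_norm_div_le (hχd : Differentiable ℝ χ)
    (hχ' : ∀ y, 0 ≤ y → |deriv χ y| ≤ 2) (hρ : 0 < ρ) (a b : X) :
    |χ (‖a‖ / ρ) - χ (‖b‖ / ρ)| ≤ 2 / ρ * ‖a - b‖ := by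
  calc |χ (‖a‖ / ρ) - χ (‖b‖ / ρ)| ≤ 2 * |‖a‖ / ρ - ‖b‖ / ρ| :=
        abs_sub_le_of_abs_deriv_le hχd hχ' (by positivity) (by positivity)
    _ = 2 / ρ * |‖a‖ - ‖b‖| := by rw [← sub_div, abs_div, abs_of_pos hρ]; ring
    _ ≤ 2 / ρ * ‖a - b‖ := by gcongr; exact abs_norm_sub_norm_le a b

variable [NormedSpace ℝ X]

noncomputable def cutoff (χ : ℝ → ℝ) (P : X →L[ℝ] X) (ρ : ℝ) (u : X) : ℝ :=
  χ (‖P u‖ / ρ) * χ (‖u - P u‖ / ρ)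

variable {P : X →L[ℝ] X}

theorem abs_cutoff_le_one (hχ : ∀ y, 0 ≤ y → |χ y| ≤ 1) (hρ : 0 < ρ) (u : X) :
    |cutoff χ P ρ u| ≤ 1 := by
  rw [cutoff, abs_mul]
  exact mul_le_one₀ (hχ _ (by positivity)) (abs_nonneg _) (hχ _ (by positivity))

theorem norm_le_of_cutoff_ne_zero (hχ : ∀ y, 2 ≤ y → χ y = 0) (hρ : 0 < ρ) {u : X}
    (hu : cutoff χ P ρ u ≠ 0) : ‖u‖ ≤ 4 * ρ := by
  have small : ∀ w : X, χ (‖w‖ / ρ) ≠ 0 → ‖w‖ ≤ 2 * ρ := fun w hw => by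
    by_contra! h
    exact hw (hχ _ ((le_div_iff₀ hρ).2 h.le))
  obtain ⟨h₁, h₂⟩ := mul_ne_zero_iff.1 hu
  calc ‖u‖ = ‖P u + (u - P u)‖ := by rw [add_sub_cancel]
    _ ≤ ‖P u‖ + ‖u - P u‖ := norm_add_le _ _
    _ ≤ 4 * ρ := by linarith [small _ h₁, small _ h₂]

theorem abs_cutoff_sub_le (hχ : ∀ y, 0 ≤ y → |χ y| ≤ 1)
    (hχd : Differentiable ℝ χ) (hχ' : ∀ y, 0 ≤ y → |deriv χ y| ≤ 2) (hρ : 0 < ρ) (u v : X) :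
    |cutoff χ P ρ u - cutoff χ P ρ v| ≤ 2 * (1 + 2 * ‖P‖) / ρ * ‖u - v‖ := by
  have hP : ‖P u - P v‖ ≤ ‖P‖ * ‖u - v‖ := by rw [← map_sub]; exact P.le_opNorm _
  have hQ : ‖(u - P u) - (v - P v)‖ ≤ (1 + ‖P‖) * ‖u - v‖ := by
    calc ‖(u - P u) - (v - P v)‖ = ‖(u - v) - (P u - P v)‖ := by congr 1; abel
      _ ≤ ‖u - v‖ + ‖P u - P v‖ := norm_sub_le _ _
      _ ≤ (1 + ‖P‖) * ‖u - v‖ := by linarith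
  calc |cutoff χ P ρ u - cutoff χ P ρ v|
      ≤ |χ (‖P u‖ / ρ) - χ (‖P v‖ / ρ)| + |χ (‖u - P u‖ / ρ) - χ (‖v - P v‖ / ρ)| :=
        abs_mul_sub_mul_le (hχ _ (by positivity)) (hχ _ (by positivity))
    _ ≤ 2 / ρ * ‖P u - P v‖ + 2 / ρ * ‖(u - P u) - (v - P v)‖ :=
        add_le_add (abs_sub_comp_norm_div_le hχd hχ' hρ _ _)
          (abs_sub_comp_norm_div_le hχd hχ' hρ _ _)
    _ ≤ 2 / ρ * (‖P‖ * ‖u - v‖) + 2 / ρ * ((1 + ‖P‖) * ‖u - v‖) := by gcongr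
    _ = 2 * (1 + 2 * ‖P‖) / ρ * ‖u - v‖ := by ring

end Cutoff

section SmulLipschitz

variable {X Y : Type*} [NormedAddCommGroup X] [NormedAddCommGroup Y] [NormedSpace ℝ Y]
  {c : X → ℝ} {f : X → Y} {L s δ : ℝ}

theorem norm_smul_sub_smul_le_of_norm_le (hc1 : ∀ u, |c u| ≤ 1)
    (hcL : ∀ u v, |c u - c v| ≤ L * ‖u - v‖) (hsupp : ∀ u, c u ≠ 0 → ‖u‖ ≤ s) (hf0 : f 0 = 0)
    (hf : ∀ u v, ‖u‖ ≤ s → ‖v‖ ≤ s → ‖f u - f v‖ ≤ δ * ‖u - v‖) (hδ : 0 ≤ δ) (u : X)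
    {v : X} (hv : ‖v‖ ≤ s) : ‖c u • f u - c v • f v‖ ≤ δ * (1 + L * s) * ‖u - v‖ := by
  have hfv : ‖f v‖ ≤ δ * s := by
    calc ‖f v‖ = ‖f v - f 0‖ := by rw [hf0, sub_zero]
      _ ≤ δ * ‖v - 0‖ := hf v 0 hv (norm_zero.trans_le ((norm_nonneg v).trans hv))
      _ ≤ δ * s := by rw [sub_zero]; gcongr
  have first : ‖c u • (f u - f v)‖ ≤ δ * ‖u - v‖ := by
    rcases eq_or_ne (c u) 0 with hu | hu
    · rw [hu, zero_smul, norm_zero]; positivity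
    · rw [norm_smul, Real.norm_eq_abs]
      calc |c u| * ‖f u - f v‖ ≤ 1 * (δ * ‖u - v‖) :=
            mul_le_mul (hc1 u) (hf u v (hsupp u hu) hv) (norm_nonneg _) zero_le_one
        _ = δ * ‖u - v‖ := one_mul _
  have second : ‖(c u - c v) • f v‖ ≤ L * ‖u - v‖ * (δ * s) := by
    rw [norm_smul, Real.norm_eq_abs]
    exact mul_le_mul (hcL u v) hfv (norm_nonneg _) ((abs_nonneg _).trans (hcL u v))
  calc ‖c u • f u - c v • f v‖ = ‖c u • (f u - f v) + (c u - c v) • f v‖ := by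
        rw [smul_sub, sub_smul]; abel_nf
    _ ≤ δ * ‖u - v‖ + L * ‖u - v‖ * (δ * s) := (norm_add_le _ _).trans (add_le_add first second)
    _ = δ * (1 + L * s) * ‖u - v‖ := by ring

theorem norm_smul_sub_smul_le (hc1 : ∀ u, |c u| ≤ 1)
    (hcL : ∀ u v, |c u - c v| ≤ L * ‖u - v‖) (hsupp : ∀ u, c u ≠ 0 → ‖u‖ ≤ s) (hf0 : f 0 = 0)
    (hf : ∀ u v, ‖u‖ ≤ s → ‖v‖ ≤ s → ‖f u - f v‖ ≤ δ * ‖u - v‖) (hδ : 0 ≤ δ) (hL : 0 ≤ L)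
    (hs : 0 ≤ s) (u v : X) :
    ‖c u • f u - c v • f v‖ ≤ δ * (1 + L * s) * ‖u - v‖ := by
  rcases eq_or_ne (c v) 0 with hv | hv
  · rcases eq_or_ne (c u) 0 with hu | hu
    · rw [hu, hv, zero_smul, zero_smul, sub_zero, norm_zero]
      positivity
    · rw [norm_sub_rev, norm_sub_rev u]
      exact norm_smul_sub_smul_le_of_norm_le hc1 hcL hsupp hf0 hf hδ v (hsupp u hu)
  · exact norm_smul_sub_smul_le_of_norm_le hc1 hcL hsupp hf0 hf hδ u (hsupp v hv)

end SmulLipschitz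

theorem cutoff_lipschitz_general {X Y : Type*}
    [NormedAddCommGroup X] [NormedSpace ℝ X]
    [NormedAddCommGroup Y] [NormedSpace ℝ Y]
    (P : X →L[ℝ] X) (p : ℝ) (hp : 0 < p)
    (R : ℝ → X → Y)
    (hRper : ∀ t : ℝ, ∀ u : X, R (t + p) u = R t u)
    (D : ℝ → X → (X →L[ℝ] Y))
    (hD : ∀ t : ℝ, ∀ u : X, HasFDerivAt (R t) (D t u) u)
    (hDcont : Continuous fun q : ℝ × X => D q.1 q.2)
    (hR0 : ∀ t : ℝ, R t 0 = 0)
    (hD0 : ∀ t : ℝ, D t 0 = 0)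
    (χ : ℝ → ℝ) (hχsmooth : ContDiff ℝ (⊤ : ℕ∞) χ)
    (hχrange : ∀ y : ℝ, 0 ≤ y → χ y ∈ Set.Icc (0 : ℝ) 1)
    (hχzero : ∀ y : ℝ, 2 ≤ y → χ y = 0)
    (hχderiv : ∀ y : ℝ, 0 ≤ y → |deriv χ y| ≤ 2) :
    ∀ ε : ℝ, 0 < ε → ∃ ρ₀ : ℝ, 0 < ρ₀ ∧ ∀ ρ : ℝ, 0 < ρ → ρ ≤ ρ₀ → ∀ t : ℝ, ∀ u v : X,
      ‖(χ (‖P u‖ / ρ) * χ (‖u - P u‖ / ρ)) • R t u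
        - (χ (‖P v‖ / ρ) * χ (‖v - P v‖ / ρ)) • R t v‖ ≤ ε * ‖u - v‖ := by
  intro ε hε
  set δ := ε / (1 + 8 * (1 + 2 * ‖P‖))
  have hδ : 0 < δ := by positivity
  have hδε : δ * (1 + 8 * (1 + 2 * ‖P‖)) = ε := div_mul_cancel₀ _ (by positivity)
  obtain ⟨r, hr, hDsmall⟩ := exists_pos_forall_norm_le_of_periodic hp hDcont
    (periodic_of_hasFDerivAt (fun t => funext (hRper t)) hD) hD0 hδ
  refine ⟨r / 4, by positivity, fun ρ hρ hρr t u v => ?_⟩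
  have hRlip : ∀ u v : X, ‖u‖ ≤ 4 * ρ → ‖v‖ ≤ 4 * ρ → ‖R t u - R t v‖ ≤ δ * ‖u - v‖ :=
    fun u v hu hv =>
      (convex_closedBall (0 : X) (4 * ρ)).norm_image_sub_le_of_norm_hasFDerivWithin_le
        (fun w _ => (hD t w).hasFDerivWithinAt)
        (fun w hw => hDsmall t w (by rw [mem_closedBall_zero_iff] at hw; linarith))
        (mem_closedBall_zero_iff.2 hv) (mem_closedBall_zero_iff.2 hu)
  have hχabs : ∀ y, 0 ≤ y → |χ y| ≤ 1 := fun y hy =>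
    abs_le.2 ⟨by linarith [(hχrange y hy).1], (hχrange y hy).2⟩
  have hχd : Differentiable ℝ χ := hχsmooth.differentiable (by simp)
  calc _ ≤ δ * (1 + 2 * (1 + 2 * ‖P‖) / ρ * (4 * ρ)) * ‖u - v‖ :=
        norm_smul_sub_smul_le (abs_cutoff_le_one hχabs hρ)
          (abs_cutoff_sub_le hχabs hχd hχderiv hρ)
          (fun _ => norm_le_of_cutoff_ne_zero hχzero hρ) (hR0 t) hRlip hδ.le
          (by positivity) (by positivity) u v
    _ = ε * ‖u - v‖ := by
        rw [← hδε]
        field_simp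
        ring

/-- Cut-off of the nonlinearity: if `R(t,u)` is continuous, `p`-periodic in `t`,
continuously Fréchet differentiable in `u` with `R(t,0) = 0` and `D₂R(t,0) = 0`, and
`χ` is a smooth bump profile, then the doubly cut-off nonlinearity
`R_ρ(t,u) = χ(‖Pu‖/ρ) χ(‖u − Pu‖/ρ) R(t,u)` is globally Lipschitz in `u`, with
Lipschitz constant at most `ε` once `ρ` is small enough (uniformly in `t`). -/
theorem cutoff_lipschitz {X Y : Type*}
    [NormedAddCommGroup X] [NormedSpace ℝ X] [CompleteSpace X]
    [NormedAddCommGroup Y] [NormedSpace ℝ Y] [CompleteSpace Y]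
    (P : X →L[ℝ] X) (hP : ∀ x : X, P (P x) = P x) (p : ℝ) (hp : 0 < p)
    (R : ℝ → X → Y)
    (hRcont : Continuous fun q : ℝ × X => R q.1 q.2)
    (hRper : ∀ t : ℝ, ∀ u : X, R (t + p) u = R t u)
    (D : ℝ → X → (X →L[ℝ] Y))
    (hD : ∀ t : ℝ, ∀ u : X, HasFDerivAt (R t) (D t u) u)
    (hDcont : Continuous fun q : ℝ × X => D q.1 q.2)
    (hR0 : ∀ t : ℝ, R t 0 = 0)
    (hD0 : ∀ t : ℝ, D t 0 = 0)
    (χ : ℝ → ℝ) (hχsmooth : ContDiff ℝ (⊤ : ℕ∞) χ)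
    (hχrange : ∀ y : ℝ, 0 ≤ y → χ y ∈ Set.Icc (0 : ℝ) 1)
    (hχone : ∀ y : ℝ, y ∈ Set.Icc (0 : ℝ) 1 → χ y = 1)
    (hχzero : ∀ y : ℝ, 2 ≤ y → χ y = 0)
    (hχderiv : ∀ y : ℝ, 0 ≤ y → |deriv χ y| ≤ 2) :
    ∀ ε : ℝ, 0 < ε → ∃ ρ₀ : ℝ, 0 < ρ₀ ∧ ∀ ρ : ℝ, 0 < ρ → ρ ≤ ρ₀ → ∀ t : ℝ, ∀ u v : X,
      ‖(χ (‖P u‖ / ρ) * χ (‖u - P u‖ / ρ)) • R t u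
        - (χ (‖P v‖ / ρ) * χ (‖v - P v‖ / ρ)) • R t v‖ ≤ ε * ‖u - v‖ :=
  cutoff_lipschitz_general P p hp R hRper D hD hDcont hR0 hD0 χ hχsmooth hχrange hχzero hχderiv
end

section
/- Let m, k be natural numbers with k ≥ 1, let Δt > 0, let I ⊆ ℝ be an interval, and let s : ℝ → ℝ be (m+1)-times continuously differentiable with |s^{(m+1)}(x)| ≤ M for all x in the interval [t, t + (k−1)Δt]. Define y(t) ∈ ℝ^k by y(t)_j := s(t + jΔt) for j = 0, …, k−1, and for 0 ≤ ℓ ≤ m define v_ℓ ∈ ℝ^k by (v_ℓ)_j := j^ℓ. Then the Euclidean norm satisfies ‖ y(t) − Σ_{ℓ=0}^{m} (Δt^ℓ/ℓ!) · s^{(ℓ)}(t) · v_ℓ ‖ ≤ √k · M · ((k−1)Δt)^{m+1} / (m+1)!. In particular, the Euclidean distance from y(t) to the linear span of {v_0, v_1, …, v_m} is at most √k · M · ((k−1)Δt)^{m+1} / (m+1)!. -/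
open scoped BigOperators

lemma my_iteratedDerivWithin_eq_iteratedDeriv {f : ℝ → ℝ} {N : ℕ∞} {n : ℕ}
    (hf : ContDiff ℝ N f) (hn : (n : ℕ∞) ≤ N) {s : Set ℝ} (hs : UniqueDiffOn ℝ s)
    {x : ℝ} (hx : x ∈ s) :
    iteratedDerivWithin n f s x = iteratedDeriv n f x := by
  rw [iteratedDerivWithin_eq_iteratedFDerivWithin, iteratedDeriv_eq_iteratedFDeriv]
  have hf' : ContDiff ℝ (n : ℕ∞) f := hf.of_le (by exact_mod_cast hn)
  have h := (contDiff_iff_ftaylorSeries.mp hf').hasFTaylorSeriesUpToOn s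
  have h2 := h.eq_iteratedFDerivWithin_of_uniqueDiffOn (le_refl _) hs hx
  rw [← h2]
  rfl

/-- Flattening of delay-embedded trajectories. -/
theorem delay_embedding_flattening (m k : ℕ) (hk : 1 ≤ k) (Δt : ℝ) (hΔt : 0 < Δt)
    (s : ℝ → ℝ) (hs : ContDiff ℝ ((m : ℕ∞) + 1) s)
    (t M : ℝ)
    (hM : ∀ x ∈ Set.Icc t (t + ((k : ℝ) - 1) * Δt), |iteratedDeriv (m + 1) s x| ≤ M)
    (y : EuclideanSpace ℝ (Fin k)) (hy : ∀ j : Fin k, y j = s (t + (j : ℝ) * Δt))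
    (v : ℕ → EuclideanSpace ℝ (Fin k)) (hv : ∀ ℓ : ℕ, ∀ j : Fin k, v ℓ j = (j : ℝ) ^ ℓ) :
    ‖y - ∑ ℓ ∈ Finset.range (m + 1),
        (Δt ^ ℓ / (Nat.factorial ℓ : ℝ) * iteratedDeriv ℓ s t) • v ℓ‖
      ≤ Real.sqrt k * M * (((k : ℝ) - 1) * Δt) ^ (m + 1) / (Nat.factorial (m + 1) : ℝ) ∧
    Metric.infDist y (Submodule.span ℝ (v '' Set.Iic m) : Set (EuclideanSpace ℝ (Fin k)))
      ≤ Real.sqrt k * M * (((k : ℝ) - 1) * Δt) ^ (m + 1) / (Nat.factorial (m + 1) : ℝ) := by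
  have hk1 : (0:ℝ) ≤ ((k:ℝ) - 1) := by
    have : (1:ℝ) ≤ (k:ℝ) := by exact_mod_cast hk
    linarith
  have htmem : t ∈ Set.Icc t (t + ((k : ℝ) - 1) * Δt) := by
    constructor
    · exact le_refl t
    · nlinarith
  have hM0 : 0 ≤ M := le_trans (abs_nonneg _) (hM t htmem)
  set B : ℝ := M * (((k : ℝ) - 1) * Δt) ^ (m + 1) / (Nat.factorial (m + 1) : ℝ) with hBdef
  have hfac : (0:ℝ) < (Nat.factorial (m + 1) : ℝ) := by positivity
  have hB : 0 ≤ B := by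
    apply div_nonneg _ hfac.le
    exact mul_nonneg hM0 (pow_nonneg (mul_nonneg hk1 hΔt.le) _)
  -- per-coordinate Taylor bound
  have key : ∀ j : Fin k,
      |s (t + (j : ℝ) * Δt) - ∑ ℓ ∈ Finset.range (m + 1),
        Δt ^ ℓ / (Nat.factorial ℓ : ℝ) * iteratedDeriv ℓ s t * (j : ℝ) ^ ℓ| ≤ B := by
    intro j
    have hjk : (j : ℝ) ≤ (k : ℝ) - 1 := by
      have : ((j : ℕ) : ℝ) + 1 ≤ (k : ℝ) := by exact_mod_cast j.2
      linarith
    rcases eq_or_lt_of_le (Nat.zero_le (j : ℕ)) with h0 | h0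
    · -- j = 0
      have hj0 : ((j : ℕ) : ℝ) = 0 := by rw [← h0]; simp
      rw [hj0]
      have hsum : ∑ ℓ ∈ Finset.range (m + 1),
          Δt ^ ℓ / (Nat.factorial ℓ : ℝ) * iteratedDeriv ℓ s t * (0:ℝ) ^ ℓ = s t := by
        rw [Finset.sum_eq_single_of_mem 0 (Finset.mem_range.mpr (Nat.succ_pos m))]
        · simp [iteratedDeriv_zero]
        · intro ℓ _ hℓ
          simp [zero_pow hℓ]
      rw [hsum]
      simp [hB]
    · -- j ≥ 1
      set x : ℝ := t + (j : ℝ) * Δt with hxdef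
      have hj0 : (0:ℝ) < (j : ℝ) := by exact_mod_cast h0
      have hlt : t < x := by
        have : 0 < (j : ℝ) * Δt := mul_pos hj0 hΔt
        simp only [hxdef]; linarith
      have hud : UniqueDiffOn ℝ (Set.Icc t x) := uniqueDiffOn_Icc hlt
      have hmle : (m : ℕ∞) ≤ (m : ℕ∞) + 1 := le_self_add
      have hcont : ContDiffOn ℝ m s (Set.Icc t x) := (hs.of_le (by exact_mod_cast hmle)).contDiffOn
      have hdm : Differentiable ℝ (iteratedDeriv m s) := by
        apply hs.differentiable_iteratedDeriv
        exact_mod_cast Nat.lt_succ_self m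
      have hdiff : DifferentiableOn ℝ (iteratedDerivWithin m s (Set.Icc t x))
          (Set.Ioo t x) := by
        intro z hz
        refine ((hdm z).differentiableWithinAt).congr ?_ ?_
        · intro w hw
          exact my_iteratedDerivWithin_eq_iteratedDeriv hs hmle hud
            (Set.Ioo_subset_Icc_self hw)
        · exact my_iteratedDerivWithin_eq_iteratedDeriv hs hmle hud
            (Set.Ioo_subset_Icc_self hz)
      obtain ⟨x', hx', hEq⟩ := taylor_mean_remainder_lagrange hlt.ne
        (by rwa [Set.uIcc_of_le hlt.le]) (by rwa [Set.uIcc_of_le hlt.le, Set.uIoo_of_le hlt.le])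
      rw [Set.uIcc_of_le hlt.le] at hEq
      rw [Set.uIoo_of_le hlt.le] at hx'
      have hTay : taylorWithinEval s m (Set.Icc t x) t x =
          ∑ ℓ ∈ Finset.range (m + 1),
            Δt ^ ℓ / (Nat.factorial ℓ : ℝ) * iteratedDeriv ℓ s t * (j : ℝ) ^ ℓ := by
        rw [taylor_within_apply]
        refine Finset.sum_congr rfl fun ℓ hℓ => ?_
        have hℓm : (ℓ : ℕ∞) ≤ (m : ℕ∞) + 1 := by
          have : ℓ ≤ m + 1 := Nat.le_of_lt_succ (Finset.mem_range.mp hℓ) |>.trans m.le_succ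
          exact_mod_cast this
        rw [my_iteratedDerivWithin_eq_iteratedDeriv hs hℓm hud
          (Set.left_mem_Icc.mpr hlt.le)]
        have hxt : x - t = (j : ℝ) * Δt := by simp [hxdef]
        rw [hxt, smul_eq_mul, mul_pow]
        ring
      rw [hTay] at hEq
      have hx'mem : x' ∈ Set.Icc t (t + ((k : ℝ) - 1) * Δt) := by
        constructor
        · exact hx'.1.le
        · have hx2 : x' ≤ x := hx'.2.le
          have : x ≤ t + ((k : ℝ) - 1) * Δt := by
            simp only [hxdef]
            nlinarith
          linarith
      have hiD : iteratedDerivWithin (m + 1) s (Set.Icc t x) x' =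
          iteratedDeriv (m + 1) s x' := by
        refine my_iteratedDerivWithin_eq_iteratedDeriv hs ?_ hud
          (Set.Ioo_subset_Icc_self hx')
        push_cast
        exact le_refl _
      rw [hiD] at hEq
      rw [hEq]
      have hxt : x - t = (j : ℝ) * Δt := by simp [hxdef]
      rw [hxt, abs_div, abs_mul]
      rw [abs_of_nonneg (pow_nonneg (mul_nonneg hj0.le hΔt.le) _),
        abs_of_nonneg hfac.le]
      rw [hBdef]
      gcongr
      exact hM x' hx'mem
  -- the vector of errors
  set p : EuclideanSpace ℝ (Fin k) := ∑ ℓ ∈ Finset.range (m + 1),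
      (Δt ^ ℓ / (Nat.factorial ℓ : ℝ) * iteratedDeriv ℓ s t) • v ℓ with hpdef
  have hcoord : ∀ j : Fin k, |(y - p) j| ≤ B := by
    intro j
    have : (y - p) j = s (t + (j : ℝ) * Δt) - ∑ ℓ ∈ Finset.range (m + 1),
        Δt ^ ℓ / (Nat.factorial ℓ : ℝ) * iteratedDeriv ℓ s t * (j : ℝ) ^ ℓ := by
      simp only [hpdef, PiLp.sub_apply, hy j]
      congr 1
      rw [show ((∑ ℓ ∈ Finset.range (m + 1),
        (Δt ^ ℓ / (Nat.factorial ℓ : ℝ) * iteratedDeriv ℓ s t) • v ℓ) j)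
        = ∑ ℓ ∈ Finset.range (m + 1),
          ((Δt ^ ℓ / (Nat.factorial ℓ : ℝ) * iteratedDeriv ℓ s t) • v ℓ) j from
        by rw [WithLp.ofLp_sum, Finset.sum_apply]]
      refine Finset.sum_congr rfl fun ℓ _ => ?_
      simp [hv ℓ j]
    rw [this]
    exact key j
  have hnorm : ‖y - p‖ ≤ Real.sqrt k * B := by
    rw [EuclideanSpace.norm_eq]
    have h1 : ∑ j : Fin k, ‖(y - p) j‖ ^ 2 ≤ ∑ _j : Fin k, B ^ 2 := by
      refine Finset.sum_le_sum fun j _ => ?_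
      have := hcoord j
      rw [Real.norm_eq_abs]
      nlinarith [abs_nonneg ((y - p) j)]
    have h2 : ∑ _j : Fin k, B ^ 2 = (k : ℝ) * B ^ 2 := by
      simp [Finset.sum_const, Finset.card_univ, nsmul_eq_mul]
    calc Real.sqrt (∑ j : Fin k, ‖(y - p) j‖ ^ 2)
        ≤ Real.sqrt ((k : ℝ) * B ^ 2) := Real.sqrt_le_sqrt (by rw [← h2]; exact h1)
      _ = Real.sqrt k * B := by
          rw [Real.sqrt_mul (by positivity), Real.sqrt_sq hB]
  have hRHS : Real.sqrt k * M * (((k : ℝ) - 1) * Δt) ^ (m + 1) /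
      (Nat.factorial (m + 1) : ℝ) = Real.sqrt k * B := by
    rw [hBdef]; ring
  constructor
  · rw [hRHS]; exact hnorm
  · rw [hRHS]
    have hmem : p ∈ (Submodule.span ℝ (v '' Set.Iic m) :
        Set (EuclideanSpace ℝ (Fin k))) := by
      refine Submodule.sum_mem _ fun ℓ hℓ => ?_
      exact Submodule.smul_mem _ _ (Submodule.subset_span
        ⟨ℓ, Nat.lt_succ_iff.mp (Finset.mem_range.mp hℓ), rfl⟩)
    calc Metric.infDist y _ ≤ dist y p := Metric.infDist_le_dist_of_mem hmem
      _ = ‖y - p‖ := by rw [dist_eq_norm]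
      _ ≤ Real.sqrt k * B := hnorm
end
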